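/- For every Banach space X, wck_X(B_X) ≤ R(X), where wck_X(A) = sup over sequences (x_n) in A of d(clust_{X**}((x_n)), X) (the distance from the set of weak* cluster points in X** to X), and R(X) = sup over sequences in B_X of inf over convex block subsequences (z_n) of ca((z_n)). -/

import Mathlib

open Filter Topology Metric Set NormedSpace

noncomputable section

/-- `y` is a convex block subsequence of `x`. -/
def IsConvexBlock {E : Type*} [AddCommGroup E] [Module ℝ E] (x y : ℕ → E) : Prop :=
  ∃ k : ℕ → ℕ, k 0 = 0 ∧ StrictMono k ∧
    ∀ n, y n ∈ convexHull ℝ (x '' Set.Ico (k n) (k (n + 1)))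

variable (X : Type*) [NormedAddCommGroup X] [NormedSpace ℝ X]

/-- A set is weakly compact if its image in the weak topology is compact. -/
def WeaklyCompact (K : Set X) : Prop := IsCompact (toWeakSpace ℝ X '' K)

/-- A sequence is weakly null. -/
def WeaklyNull (x : ℕ → X) : Prop :=
  ∀ f : X →L[ℝ] ℝ, Tendsto (fun n => f (x n)) atTop (𝓝 0)

/-- A sequence in the dual is weak* null. -/
def WeakStarNull (f : ℕ → X →L[ℝ] ℝ) : Prop :=
  ∀ x : X, Tendsto (fun n => f n x) atTop (𝓝 0)

/-- A sequence in the dual is weak* Cauchy. -/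
def WeakStarCauchy (f : ℕ → X →L[ℝ] ℝ) : Prop :=
  ∀ x : X, ∃ L : ℝ, Tendsto (fun n => f n x) atTop (𝓝 L)

variable {X}

/-- α((f_n)) = sup over weakly compact K ⊆ B_X of limsup_n sup_{x ∈ K} |⟨f_n, x⟩|. -/
def alphaQ (f : ℕ → X →L[ℝ] ℝ) : ℝ :=
  sSup { r | ∃ K : Set X, K ⊆ closedBall 0 1 ∧ WeaklyCompact X K ∧
    r = limsup (fun n => sSup ((fun x => |f n x|) '' K)) atTop }

/-- β((f_n)) = sup over weakly null (x_n) in B_X of limsup_n |⟨f_n, x_n⟩|. -/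
def betaQ (f : ℕ → X →L[ℝ] ℝ) : ℝ :=
  sSup { r | ∃ x : ℕ → X, (∀ n, x n ∈ closedBall (0 : X) 1) ∧ WeaklyNull X x ∧
    r = limsup (fun n => |f n (x n)|) atTop }

/-- ca_{ρ*}((f_n)): measures Mackey-Cauchyness. -/
def caRho (f : ℕ → X →L[ℝ] ℝ) : ℝ :=
  sSup { r | ∃ K : Set X, K ⊆ closedBall 0 1 ∧ WeaklyCompact X K ∧
    r = ⨅ n : ℕ, sSup { t | ∃ k ≥ n, ∃ l ≥ n, ∃ x ∈ K, t = |(f k - f l) x| } }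

/-- ca((z_n)) = inf_n sup_{k,l ≥ n} ‖z_k - z_l‖. -/
def caSeq {E : Type*} [NormedAddCommGroup E] (z : ℕ → E) : ℝ :=
  ⨅ n : ℕ, sSup { r | ∃ k ≥ n, ∃ l ≥ n, r = ‖z k - z l‖ }

variable (X)

def K1 : ℝ :=
  sSup { r | ∃ f : ℕ → X →L[ℝ] ℝ, (∀ n, ‖f n‖ ≤ 1) ∧ WeakStarNull X f ∧
    r = sInf { s | ∃ g, IsConvexBlock f g ∧ s = alphaQ g } }

def K2 : ℝ :=
  sSup { r | ∃ f : ℕ → X →L[ℝ] ℝ, (∀ n, ‖f n‖ ≤ 1) ∧ WeakStarNull X f ∧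
    r = sInf { s | ∃ g, IsConvexBlock f g ∧ s = betaQ g } }

def K3 : ℝ :=
  sSup { r | ∃ f : ℕ → X →L[ℝ] ℝ, (∀ n, ‖f n‖ ≤ 1) ∧ WeakStarCauchy X f ∧
    r = sInf { s | ∃ g, IsConvexBlock f g ∧ s = caRho g } }

/-- Property (K). -/
def PropertyK : Prop :=
  ∀ f : ℕ → X →L[ℝ] ℝ, WeakStarNull X f → ∃ g, IsConvexBlock f g ∧ alphaQ g = 0

/-- The Grothendieck property: every weak* null sequence in the dual is weakly null. -/
def Grothendieck : Prop :=
  ∀ f : ℕ → X →L[ℝ] ℝ, WeakStarNull X f →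
    ∀ Φ : (X →L[ℝ] ℝ) →L[ℝ] ℝ, Tendsto (fun n => Φ (f n)) atTop (𝓝 0)

def GQ : ℝ :=
  sSup { r | ∃ f : ℕ → X →L[ℝ] ℝ, (∀ n, ‖f n‖ ≤ 1) ∧ WeakStarNull X f ∧
    r = sInf { s | ∃ g, IsConvexBlock f g ∧ s = limsup (fun n => ‖g n‖) atTop } }

def RQ : ℝ :=
  sSup { r | ∃ x : ℕ → X, (∀ n, x n ∈ closedBall (0 : X) 1) ∧
    r = sInf { s | ∃ z, IsConvexBlock x z ∧ s = caSeq z } }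

/-- weak* cluster points in the bidual of a sequence in the bidual. -/
def WStarClusterPts (u : ℕ → (X →L[ℝ] ℝ) →L[ℝ] ℝ) : Set ((X →L[ℝ] ℝ) →L[ℝ] ℝ) :=
  { z | MapClusterPt (StrongDual.toWeakDual (𝕜 := ℝ) z) atTop
      (fun n => StrongDual.toWeakDual (𝕜 := ℝ) (u n)) }

def wckQ (A : Set X) : ℝ :=
  sSup { r | ∃ x : ℕ → X, (∀ n, x n ∈ A) ∧
    r = sInf { s | ∃ z ∈ WStarClusterPts X (fun n => inclusionInDoubleDual ℝ X (x n)),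
      ∃ v : X, s = ‖z - inclusionInDoubleDual ℝ X v‖ } }

/-!
Let `x` be a sequence in `B_X` with a weak* cluster point `Φ ∈ X**` at distance `≥ r` from `X`.
Fix a dense sequence `(w_t)` in the closed span of the `x_n`, and for each `t` a functional
`f_t ∈ B_{X*}` with `|(Φ - w_t)(f_t)| > r - ε`. Since `Φ` is a weak* cluster point, one can pick
`y_j = x_{N_j}` with `|f_t(y_j) - Φ(f_t)| < ε` for all `t ≤ j`. If `(z_n)` is a convex block
sequence of `(y_j)` and `w_t` is `ε`-close to `z_n`, then `z_l` with `l = max n t` is a convex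
combination of `y_j`'s with `j ≥ t`, so `f_t` separates `z_l` from `z_n` by about `r - 3ε`.
Hence `ca((z_n)) ≥ r - 3ε` for every convex block sequence of `(y_j)`, and `R(X) ≥ r`.
-/

section ConvexBlock

variable {E : Type*} [AddCommGroup E] [Module ℝ E]

lemma IsConvexBlock.refl (x : ℕ → E) : IsConvexBlock x x :=
  ⟨id, rfl, strictMono_id, fun n => subset_convexHull ℝ _ ⟨n, ⟨le_rfl, Nat.lt_succ_self n⟩, rfl⟩⟩

lemma IsConvexBlock.mem_of_forall_ge {x z : ℕ → E} (h : IsConvexBlock x z) {C : Set E}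
    (hC : Convex ℝ C) {m n : ℕ} (hx : ∀ j ≥ m, x j ∈ C) (hmn : m ≤ n) : z n ∈ C := by
  obtain ⟨k, -, hk, hz⟩ := h
  refine convexHull_min ?_ hC (hz n)
  rintro _ ⟨j, hj, rfl⟩
  exact hx j (hmn.trans <| hk.le_apply.trans hj.1)

lemma IsConvexBlock.mem_of_forall {x z : ℕ → E} (h : IsConvexBlock x z) {C : Set E}
    (hC : Convex ℝ C) (hx : ∀ j, x j ∈ C) (n : ℕ) : z n ∈ C :=
  h.mem_of_forall_ge hC (fun j _ => hx j) n.zero_le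

end ConvexBlock

section CaSeq

variable {E : Type*} [NormedAddCommGroup E]

lemma sSup_norm_sub_nonneg (z : ℕ → E) (n : ℕ) :
    0 ≤ sSup {r | ∃ k ≥ n, ∃ l ≥ n, r = ‖z k - z l‖} :=
  Real.sSup_nonneg <| by
    rintro _ ⟨k, -, l, -, rfl⟩
    exact norm_nonneg _

lemma caSeq_nonneg (z : ℕ → E) : 0 ≤ caSeq z :=
  Real.iInf_nonneg (sSup_norm_sub_nonneg z)

lemma two_mul_mem_upperBounds_norm_sub {z : ℕ → E} {C : ℝ} (hz : ∀ n, ‖z n‖ ≤ C) (n : ℕ) :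
    2 * C ∈ upperBounds {r | ∃ k ≥ n, ∃ l ≥ n, r = ‖z k - z l‖} := by
  rintro _ ⟨k, -, l, -, rfl⟩
  linarith [norm_sub_le (z k) (z l), hz k, hz l]

lemma caSeq_le_of_norm_le {z : ℕ → E} {C : ℝ} (hz : ∀ n, ‖z n‖ ≤ C) : caSeq z ≤ 2 * C :=
  (ciInf_le ⟨0, Set.forall_mem_range.2 (sSup_norm_sub_nonneg z)⟩ 0).trans
    (csSup_le ⟨0, 0, le_rfl, 0, le_rfl, by simp⟩ (two_mul_mem_upperBounds_norm_sub hz 0))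

lemma le_caSeq {z : ℕ → E} {C : ℝ} (hz : ∀ n, ‖z n‖ ≤ C) {c : ℝ}
    (h : ∀ n, ∃ k ≥ n, c ≤ ‖z k - z n‖) : c ≤ caSeq z :=
  le_ciInf fun n =>
    let ⟨k, hk, hc⟩ := h n
    le_csSup_of_le ⟨_, two_mul_mem_upperBounds_norm_sub hz n⟩ ⟨k, hk, n, le_rfl, rfl⟩ hc

end CaSeq

section Dual

variable {E : Type*} [NormedAddCommGroup E] [NormedSpace ℝ E]

lemma abs_apply_sub_apply_le {f : StrongDual ℝ E} (hf : ‖f‖ ≤ 1) (u v : E) :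
    |f u - f v| ≤ ‖u - v‖ := by
  rw [← map_sub]
  exact (f.le_opNorm _).trans (mul_le_of_le_one_left (norm_nonneg _) hf)

lemma exists_seq_span_subset_closure_range (x : ℕ → E) :
    ∃ w : ℕ → E, (Submodule.span ℝ (range x) : Set E) ⊆ closure (range w) := by
  obtain ⟨c, hc, hspan⟩ := (countable_range x).isSeparable.span (R := ℝ)
  obtain ⟨w, rfl⟩ := hc.exists_eq_range
    (closure_nonempty_iff.1 ⟨0, hspan (Submodule.zero_mem _)⟩)
  exact ⟨w, hspan⟩

lemma exists_forall_abs_sub_lt_of_mem_wStarClusterPts {u : ℕ → StrongDual ℝ (StrongDual ℝ E)}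
    {Φ : StrongDual ℝ (StrongDual ℝ E)} (hΦ : Φ ∈ WStarClusterPts E u)
    (f : ℕ → StrongDual ℝ E) (j : ℕ) {ε : ℝ} (hε : 0 < ε) :
    ∃ n, ∀ t ≤ j, |u n (f t) - Φ (f t)| < ε := by
  have hnear : ∀ᶠ Ψ in 𝓝 (StrongDual.toWeakDual Φ), ∀ t ∈ Finset.Iic j, |Ψ (f t) - Φ (f t)| < ε :=
    (Finset.eventually_all _).2 fun t _ =>
      ((WeakDual.eval_continuous (f t)).tendsto _).eventually (ball_mem_nhds _ hε)
  obtain ⟨n, hn⟩ := (hΦ.frequently hnear).exists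
  exact ⟨n, fun t ht => hn t (Finset.mem_Iic.2 ht)⟩

end Dual

section Main

variable {E : Type*} [NormedAddCommGroup E] [NormedSpace ℝ E]

lemma RQ_nonneg : 0 ≤ RQ E :=
  Real.sSup_nonneg <| by
    rintro _ ⟨x, -, rfl⟩
    exact Real.sInf_nonneg <| by
      rintro _ ⟨z, -, rfl⟩
      exact caSeq_nonneg z

lemma le_RQ_of_forall_isConvexBlock {y : ℕ → E} (hy : ∀ n, y n ∈ closedBall 0 1) {c : ℝ}
    (h : ∀ z, IsConvexBlock y z → c ≤ caSeq z) : c ≤ RQ E := by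
  have hbdd : BddAbove {r | ∃ x : ℕ → E, (∀ n, x n ∈ closedBall (0 : E) 1) ∧
      r = sInf { s | ∃ z, IsConvexBlock x z ∧ s = caSeq z } } := by
    refine ⟨2 * 1, ?_⟩
    rintro _ ⟨x, hx, rfl⟩
    have hinf : BddBelow {s | ∃ z, IsConvexBlock x z ∧ s = caSeq z} := ⟨0, by
      rintro _ ⟨z, -, rfl⟩
      exact caSeq_nonneg z⟩
    exact (csInf_le hinf ⟨x, .refl x, rfl⟩).trans
      (caSeq_le_of_norm_le fun n => mem_closedBall_zero_iff.1 (hx n))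
  exact le_csSup_of_le hbdd ⟨y, hy, rfl⟩ <| le_csInf ⟨caSeq y, y, .refl y, rfl⟩ <| by
    rintro _ ⟨z, hz, rfl⟩
    exact h z hz

lemma sub_two_mul_le_caSeq {y w : ℕ → E} {f : ℕ → StrongDual ℝ E} {a : ℕ → ℝ} {S : Set E}
    {C r ε : ℝ} (hyC : ∀ n, ‖y n‖ ≤ C) (hS : Convex ℝ S) (hyS : ∀ n, y n ∈ S)
    (hw : S ⊆ closure (range w)) (hf : ∀ t, ‖f t‖ ≤ 1) (hsep : ∀ t, r < |a t - f t (w t)|)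
    (hya : ∀ t, ∀ j ≥ t, |f t (y j) - a t| ≤ ε) (hε : 0 < ε) {z : ℕ → E}
    (hz : IsConvexBlock y z) : r - 2 * ε ≤ caSeq z := by
  have hzC : ∀ n, ‖z n‖ ≤ C := fun n =>
    mem_closedBall_zero_iff.1 <| hz.mem_of_forall (convex_closedBall 0 C)
      (fun j => mem_closedBall_zero_iff.2 (hyC j)) n
  refine le_caSeq hzC fun n => ?_
  obtain ⟨t, hwt⟩ : ∃ t, ‖z n - w t‖ < ε := by
    obtain ⟨_, ⟨t, rfl⟩, hd⟩ := Metric.mem_closure_iff.1 (hw (hz.mem_of_forall hS hyS n)) ε hε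
    exact ⟨t, by rwa [← dist_eq_norm]⟩
  set l := max n t
  have hl : |f t (z l) - a t| ≤ ε := by
    have hconv : Convex ℝ {u | |f t u - a t| ≤ ε} := by
      simpa only [preimage, mem_closedBall, Real.dist_eq, ContinuousLinearMap.coe_coe] using
        (convex_closedBall (a t) ε).linear_preimage (f t : E →ₗ[ℝ] ℝ)
    exact hz.mem_of_forall_ge hconv (hya t) (le_max_right n t)
  have hn : |f t (z n) - f t (w t)| ≤ ε := (abs_apply_sub_apply_le (hf t) _ _).trans hwt.le
  refine ⟨l, le_max_left n t, ?_⟩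
  calc r - 2 * ε ≤ |a t - f t (w t)| - |f t (z l) - a t| - |f t (z n) - f t (w t)| := by
        linarith [hsep t]
    _ ≤ |f t (z l) - f t (z n)| := by
        have := abs_add_three (a t - f t (z l)) (f t (z l) - f t (z n)) (f t (z n) - f t (w t))
        rw [abs_sub_comm (a t)] at this
        ring_nf at this ⊢
        linarith
    _ ≤ ‖z l - z n‖ := abs_apply_sub_apply_le (hf t) _ _

lemma le_RQ_of_mem_wStarClusterPts {x : ℕ → E} (hx : ∀ n, x n ∈ closedBall 0 1)
    {Φ : StrongDual ℝ (StrongDual ℝ E)}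
    (hΦ : Φ ∈ WStarClusterPts E fun n => inclusionInDoubleDual ℝ E (x n)) {r : ℝ}
    (hr : ∀ v, r ≤ ‖Φ - inclusionInDoubleDual ℝ E v‖) : r ≤ RQ E := by
  refine le_of_forall_pos_le_add fun ε hε => sub_le_iff_le_add.1 ?_
  have hδ : 0 < ε / 3 := by positivity
  obtain ⟨w, hw⟩ := exists_seq_span_subset_closure_range x
  choose f hf hsep using fun t =>
    (Φ - inclusionInDoubleDual ℝ E (w t)).exists_lt_apply_of_lt_opNorm
      (show r - ε / 3 < _ by linarith [hr (w t)])
  choose N hN using fun j => exists_forall_abs_sub_lt_of_mem_wStarClusterPts hΦ f j hδ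
  refine le_RQ_of_forall_isConvexBlock (y := x ∘ N) (fun n => hx (N n)) fun z hz => ?_
  have := sub_two_mul_le_caSeq (fun n => mem_closedBall_zero_iff.1 (hx (N n)))
    (Submodule.span ℝ (range x)).convex (fun n => Submodule.subset_span ⟨N n, rfl⟩) hw
    (fun t => (hf t).le) (fun t => by simpa [dual_def, Real.norm_eq_abs] using hsep t)
    (fun t j hj => by simpa [dual_def] using (hN j t hj).le) hδ hz
  linarith

end Main

theorem stmt14_general {X : Type*} [NormedAddCommGroup X] [NormedSpace ℝ X] :
    wckQ X (closedBall (0 : X) 1) ≤ RQ X := by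
  refine Real.sSup_le ?_ RQ_nonneg
  rintro _ ⟨x, hx, rfl⟩
  set I := {s | ∃ z ∈ WStarClusterPts X (fun n => inclusionInDoubleDual ℝ X (x n)),
      ∃ v : X, s = ‖z - inclusionInDoubleDual ℝ X v‖}
  rcases I.eq_empty_or_nonempty with hI | ⟨_, Φ, hΦ, -⟩
  · -- `sInf ∅ = 0`, so this case needs no Banach–Alaoglu argument.
    rw [hI, Real.sInf_empty]
    exact RQ_nonneg
  · have hbdd : BddBelow I := ⟨0, by
      rintro _ ⟨z, -, v, rfl⟩
      positivity⟩
    exact le_RQ_of_mem_wStarClusterPts hx hΦ fun v => csInf_le hbdd ⟨Φ, hΦ, v, rfl⟩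

theorem stmt14 {X : Type*} [NormedAddCommGroup X] [NormedSpace ℝ X] [CompleteSpace X] :
    wckQ X (closedBall (0 : X) 1) ≤ RQ X :=
  stmt14_general
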